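/- Let A ∈ ℝ^{m×np}, let s^* = inf{‖z‖_{b1}/‖z‖_{b∞} : z ≠ 0, Az = 0}, and fix s with 1 < s < s^*. Define f_s(η) = sup{‖z‖_{b∞} : z ∈ ℝ^{np}, ‖Az‖₂ ≤ 1, ‖z‖_{b1} ≤ sη} for η ∈ [0,∞). Then f_s has a unique positive fixed point η^* (i.e., a unique η^* > 0 with f_s(η^*) = η^*), and η^* = 1/ω₂(A,s). -/

import Mathlib

open MeasureTheory ProbabilityTheory Finset Matrix

/-- Euclidean norm of a finitely-indexed real vector. -/
noncomputable def vnorm {ι : Type*} [Fintype ι] (v : ι → ℝ) : ℝ :=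
  Real.sqrt (∑ i, (v i) ^ 2)

/-- Euclidean norm of the `i`-th block of `x ∈ ℝ^{np}` (blocks indexed by `Fin p`). -/
noncomputable def bnorm {n p : ℕ} (x : Fin p × Fin n → ℝ) (i : Fin p) : ℝ :=
  vnorm (fun j => x (i, j))

/-- Block-ℓ1 norm: `‖x‖_{b1} = ∑ i, ‖x_i‖₂`. -/
noncomputable def bl1 {n p : ℕ} (x : Fin p × Fin n → ℝ) : ℝ :=
  ∑ i, bnorm x i

/-- Block-ℓ∞ norm: `‖x‖_{b∞} = max_i ‖x_i‖₂`. -/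
noncomputable def blinf {n p : ℕ} (x : Fin p × Fin n → ℝ) : ℝ :=
  ⨆ i, bnorm x i

open scoped Classical in
/-- Block support: indices of nonzero blocks. -/
noncomputable def bsupp {n p : ℕ} (x : Fin p × Fin n → ℝ) : Finset (Fin p) :=
  Finset.univ.filter (fun i => ∃ j, x (i, j) ≠ 0)

/-- `ω₂(A,s) = inf { ‖Az‖₂ / ‖z‖_{b∞} : z ≠ 0, ‖z‖_{b1} ≤ s ‖z‖_{b∞} }`. -/
noncomputable def omega2 {m n p : ℕ} (A : Matrix (Fin m) (Fin p × Fin n) ℝ) (s : ℝ) : ℝ :=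
  sInf {r | ∃ z : Fin p × Fin n → ℝ, z ≠ 0 ∧ bl1 z ≤ s * blinf z ∧
    r = vnorm (A.mulVec z) / blinf z}

/-- `ω_{b∞}(AᵀA,s) = inf { ‖AᵀAz‖_{b∞} / ‖z‖_{b∞} : z ≠ 0, ‖z‖_{b1} ≤ s ‖z‖_{b∞} }`. -/
noncomputable def omegaBInf {m n p : ℕ} (A : Matrix (Fin m) (Fin p × Fin n) ℝ) (s : ℝ) : ℝ :=
  sInf {r | ∃ z : Fin p × Fin n → ℝ, z ≠ 0 ∧ bl1 z ≤ s * blinf z ∧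
    r = blinf ((Aᵀ * A).mulVec z) / blinf z}

/-- Block ℓ1-constrained minimal singular value
`ρ_s(A) = inf { ‖Az‖₂ / ‖z‖₂ : z ≠ 0, ‖z‖_{b1}² ≤ s ‖z‖₂² }`. -/
noncomputable def rhoCMSV {m n p : ℕ} (A : Matrix (Fin m) (Fin p × Fin n) ℝ) (s : ℝ) : ℝ :=
  sInf {r | ∃ z : Fin p × Fin n → ℝ, z ≠ 0 ∧ (bl1 z) ^ 2 ≤ s * (vnorm z) ^ 2 ∧
    r = vnorm (A.mulVec z) / vnorm z}

/-- Spectral norm (largest singular value) of a real matrix, as the ℓ2→ℓ2 operator norm. -/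
noncomputable def specNorm {ι κ : Type*} [Fintype ι] [Fintype κ] (M : Matrix ι κ ℝ) : ℝ :=
  sSup {r | ∃ v : κ → ℝ, vnorm v ≤ 1 ∧ r = vnorm (M.mulVec v)}

/-- The `j`-th column block (of `n` columns) of a matrix with `np` columns. -/
def colBlock {ι : Type*} {n p : ℕ} (Q : Matrix ι (Fin p × Fin n) ℝ) (j : Fin p) :
    Matrix ι (Fin n) ℝ := Matrix.of fun r c => Q r (j, c)

/-- The `l`-th row block (of `n` rows) of a matrix with `np` rows. -/
def rowBlock {κ : Type*} {n p : ℕ} (P : Matrix (Fin p × Fin n) κ ℝ) (l : Fin p) :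
    Matrix (Fin n) κ ℝ := Matrix.of fun r c => P (l, r) c

/-- `δ_{ij} Iₙ`. -/
def deltaId (n : ℕ) {p : ℕ} (i j : Fin p) : Matrix (Fin n) (Fin n) ℝ :=
  if i = j then 1 else 0

/-- Orlicz ψ₂ norm of a scalar random variable. -/
noncomputable def psi2 {Ω : Type*} [MeasurableSpace Ω] (μ : Measure Ω) (Y : Ω → ℝ) : ℝ :=
  sInf {t | 0 < t ∧ ∫ ω, Real.exp ((Y ω) ^ 2 / t ^ 2) ∂μ ≤ 2}

/-!
Put `η₀ = 1 / ω₂(A, s)`. A feasible `z` for `f_s(η)` either has `‖z‖_{b∞} ≤ η`, or lies in the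
cone `‖z‖_{b1} ≤ s‖z‖_{b∞}`, where `ω₂ ‖z‖_{b∞} ≤ ‖Az‖₂ ≤ 1`; hence `f_s(η₀) ≤ η₀`, and a rescaled
minimiser of `ω₂` gives equality. The minimiser exists by compactness and is not in `ker A`
because `s < s^*`, so `ω₂ > 0`.

Conversely, let `f_s(η) = η`. A maximiser for `f_s(η)` (again by compactness) lies in the cone
with `‖z‖_{b∞} = η`, so `ω₂ ≤ 1/η`. If some cone vector `w` with `‖w‖_{b∞} = η` had `‖Aw‖₂ < 1`,
moving `w` slightly towards `s` times its largest block would stay feasible and increase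
`‖w‖_{b∞}` beyond `f_s(η)`; hence `‖Aw‖₂ ≥ 1` on all such `w`, i.e. `ω₂ ≥ 1/η`.
-/

section Euclidean

variable {ι : Type*} [Fintype ι]

lemma vnorm_eq_norm (v : ι → ℝ) : vnorm v = ‖WithLp.toLp 2 v‖ := by
  simp [vnorm, EuclideanSpace.norm_eq]

lemma vnorm_nonneg (v : ι → ℝ) : 0 ≤ vnorm v := by
  rw [vnorm_eq_norm]
  exact norm_nonneg _

lemma vnorm_eq_zero {v : ι → ℝ} : vnorm v = 0 ↔ v = 0 := by
  rw [vnorm_eq_norm, norm_eq_zero, WithLp.toLp_eq_zero]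

lemma vnorm_add_le (u v : ι → ℝ) : vnorm (u + v) ≤ vnorm u + vnorm v := by
  simpa only [vnorm_eq_norm, WithLp.toLp_add] using norm_add_le _ _

lemma vnorm_smul (c : ℝ) (v : ι → ℝ) : vnorm (c • v) = |c| * vnorm v := by
  rw [vnorm_eq_norm, vnorm_eq_norm, WithLp.toLp_smul, norm_smul, Real.norm_eq_abs]

lemma abs_le_vnorm (v : ι → ℝ) (i : ι) : |v i| ≤ vnorm v := by
  simpa [vnorm_eq_norm] using PiLp.norm_apply_le (WithLp.toLp 2 v) i

lemma continuous_vnorm : Continuous (vnorm : (ι → ℝ) → ℝ) := by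
  simp only [funext vnorm_eq_norm]
  exact continuous_norm.comp (PiLp.continuous_toLp 2 _)

end Euclidean

section Blocks

variable {n p : ℕ}

lemma bnorm_congr {x y : Fin p × Fin n → ℝ} {i : Fin p} (h : ∀ j, x (i, j) = y (i, j)) :
    bnorm x i = bnorm y i := by
  unfold bnorm
  congr 1
  exact funext h

lemma bnorm_nonneg (x : Fin p × Fin n → ℝ) (i : Fin p) : 0 ≤ bnorm x i := vnorm_nonneg _

lemma bnorm_zero (i : Fin p) : bnorm (0 : Fin p × Fin n → ℝ) i = 0 :=
  vnorm_eq_zero.2 rfl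

lemma bnorm_smul (c : ℝ) (x : Fin p × Fin n → ℝ) (i : Fin p) :
    bnorm (c • x) i = |c| * bnorm x i := vnorm_smul c _

lemma bnorm_add_le (x y : Fin p × Fin n → ℝ) (i : Fin p) :
    bnorm (x + y) i ≤ bnorm x i + bnorm y i := vnorm_add_le _ _

lemma abs_le_bnorm (x : Fin p × Fin n → ℝ) (b : Fin p × Fin n) : |x b| ≤ bnorm x b.1 :=
  abs_le_vnorm (fun j => x (b.1, j)) b.2

lemma continuous_bnorm (i : Fin p) : Continuous fun x : Fin p × Fin n → ℝ => bnorm x i :=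
  continuous_vnorm.comp (continuous_pi fun j => continuous_apply (i, j))

lemma bl1_nonneg (x : Fin p × Fin n → ℝ) : 0 ≤ bl1 x :=
  Finset.sum_nonneg fun i _ => bnorm_nonneg x i

lemma bl1_smul (c : ℝ) (x : Fin p × Fin n → ℝ) : bl1 (c • x) = |c| * bl1 x := by
  simp only [bl1, bnorm_smul, Finset.mul_sum]

lemma bl1_add_le (x y : Fin p × Fin n → ℝ) : bl1 (x + y) ≤ bl1 x + bl1 y := by
  rw [bl1, bl1, bl1, ← Finset.sum_add_distrib]
  exact Finset.sum_le_sum fun i _ => bnorm_add_le x y i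

lemma bnorm_le_bl1 (x : Fin p × Fin n → ℝ) (i : Fin p) : bnorm x i ≤ bl1 x :=
  Finset.single_le_sum (fun j _ => bnorm_nonneg x j) (Finset.mem_univ i)

lemma abs_le_bl1 (x : Fin p × Fin n → ℝ) (b : Fin p × Fin n) : |x b| ≤ bl1 x :=
  (abs_le_bnorm x b).trans (bnorm_le_bl1 x b.1)

lemma continuous_bl1 : Continuous (bl1 : (Fin p × Fin n → ℝ) → ℝ) :=
  continuous_finsetSum _ fun i _ => continuous_bnorm i

lemma bnorm_le_blinf (x : Fin p × Fin n → ℝ) (i : Fin p) : bnorm x i ≤ blinf x :=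
  le_ciSup (Set.finite_range _).bddAbove i

lemma blinf_nonneg (x : Fin p × Fin n → ℝ) : 0 ≤ blinf x :=
  Real.iSup_nonneg (bnorm_nonneg x)

lemma blinf_pos {x : Fin p × Fin n → ℝ} (hx : x ≠ 0) : 0 < blinf x := by
  obtain ⟨b, hb⟩ := Function.ne_iff.1 hx
  exact (abs_pos.2 hb).trans_le ((abs_le_bnorm x b).trans (bnorm_le_blinf x b.1))

lemma blinf_zero : blinf (0 : Fin p × Fin n → ℝ) = 0 := by
  simp only [blinf, bnorm_zero, Real.iSup_const_zero]

lemma blinf_le [Nonempty (Fin p)] {x : Fin p × Fin n → ℝ} {c : ℝ} (h : ∀ i, bnorm x i ≤ c) :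
    blinf x ≤ c :=
  ciSup_le h

lemma blinf_le_bl1 [Nonempty (Fin p)] (x : Fin p × Fin n → ℝ) : blinf x ≤ bl1 x :=
  blinf_le (bnorm_le_bl1 x)

lemma exists_bnorm_eq_blinf [Nonempty (Fin p)] (x : Fin p × Fin n → ℝ) :
    ∃ i, bnorm x i = blinf x := by
  obtain ⟨i, hi⟩ := Finite.exists_max (bnorm x)
  exact ⟨i, le_antisymm (bnorm_le_blinf x i) (blinf_le hi)⟩

lemma blinf_smul [Nonempty (Fin p)] (c : ℝ) (x : Fin p × Fin n → ℝ) :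
    blinf (c • x) = |c| * blinf x := by
  obtain ⟨i, hi⟩ := exists_bnorm_eq_blinf x
  refine le_antisymm (blinf_le fun j => ?_) ?_
  · rw [bnorm_smul]
    exact mul_le_mul_of_nonneg_left (bnorm_le_blinf x j) (abs_nonneg c)
  · rw [← hi, ← bnorm_smul]
    exact bnorm_le_blinf _ i

lemma continuous_blinf [Nonempty (Fin p)] :
    Continuous (blinf : (Fin p × Fin n → ℝ) → ℝ) := by
  have h : blinf = fun x : Fin p × Fin n → ℝ => Finset.univ.sup' Finset.univ_nonempty (bnorm x) :=
    funext fun x => (Finset.sup'_univ_eq_ciSup _).symm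
  rw [h]
  exact Continuous.finset_sup'_apply _ fun i _ => continuous_bnorm i

lemma blinf_div_blinf_smul [Nonempty (Fin p)] {x : Fin p × Fin n → ℝ} (hx : x ≠ 0) {η : ℝ}
    (hη : 0 ≤ η) : blinf ((η / blinf x) • x) = η := by
  have := blinf_pos hx
  rw [blinf_smul, abs_of_nonneg (by positivity), div_mul_cancel₀ _ this.ne']

lemma bl1_div_blinf_smul_le {x : Fin p × Fin n → ℝ} (hx : x ≠ 0) {s η : ℝ}
    (hxs : bl1 x ≤ s * blinf x) (hη : 0 ≤ η) : bl1 ((η / blinf x) • x) ≤ s * η := by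
  have := blinf_pos hx
  calc bl1 ((η / blinf x) • x) = η / blinf x * bl1 x := by
        rw [bl1_smul, abs_of_nonneg (by positivity)]
    _ ≤ η / blinf x * (s * blinf x) := by gcongr
    _ = s * η := by field_simp

lemma isCompact_of_isClosed_of_bl1_le {S : Set (Fin p × Fin n → ℝ)} (hS : IsClosed S) {R : ℝ}
    (hR : ∀ z ∈ S, bl1 z ≤ R) : IsCompact S := by
  refine Metric.isCompact_of_isClosed_isBounded hS (isBounded_iff_forall_norm_le.2 ⟨R, ?_⟩)
  intro z hz
  refine (pi_norm_le_iff_of_nonneg ((bl1_nonneg z).trans (hR z hz))).2 fun b => ?_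
  exact (Real.norm_eq_abs _ ▸ abs_le_bl1 z b).trans (hR z hz)

def restrictBlock (x : Fin p × Fin n → ℝ) (i : Fin p) : Fin p × Fin n → ℝ :=
  fun b => if b.1 = i then x b else 0

lemma bnorm_restrictBlock (x : Fin p × Fin n → ℝ) (i k : Fin p) :
    bnorm (restrictBlock x i) k = if k = i then bnorm x i else 0 := by
  split_ifs with h
  · subst h
    exact bnorm_congr fun j => if_pos rfl
  · rw [← bnorm_zero k]
    exact bnorm_congr fun j => if_neg h

lemma bl1_restrictBlock (x : Fin p × Fin n → ℝ) (i : Fin p) :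
    bl1 (restrictBlock x i) = bnorm x i := by
  simp only [bl1, bnorm_restrictBlock, Finset.sum_ite_eq', Finset.mem_univ, if_true]

lemma exists_ne_zero_bl1_le_blinf {x : Fin p × Fin n → ℝ} (hx : x ≠ 0) :
    ∃ y : Fin p × Fin n → ℝ, y ≠ 0 ∧ bl1 y ≤ blinf y := by
  obtain ⟨b, hb⟩ := Function.ne_iff.1 hx
  refine ⟨restrictBlock x b.1, fun h => hb (by simpa [restrictBlock] using congrFun h b), ?_⟩
  rw [bl1_restrictBlock]
  simpa [bnorm_restrictBlock] using bnorm_le_blinf (restrictBlock x b.1) b.1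

end Blocks

section Omega

variable {m n p : ℕ} (A : Matrix (Fin m) (Fin p × Fin n) ℝ)

lemma continuous_vnorm_mulVec : Continuous fun z : Fin p × Fin n → ℝ => vnorm (A *ᵥ z) :=
  continuous_vnorm.comp (continuous_const.matrix_mulVec continuous_id)

lemma vnorm_mulVec_smul (c : ℝ) (z : Fin p × Fin n → ℝ) :
    vnorm (A *ᵥ (c • z)) = |c| * vnorm (A *ᵥ z) := by
  rw [Matrix.mulVec_smul, vnorm_smul]

variable {s : ℝ}

lemma omega2_le {z : Fin p × Fin n → ℝ} (hz : z ≠ 0) (hzs : bl1 z ≤ s * blinf z) :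
    omega2 A s ≤ vnorm (A *ᵥ z) / blinf z := by
  refine csInf_le ⟨0, ?_⟩ ⟨z, hz, hzs, rfl⟩
  rintro r ⟨y, -, -, rfl⟩
  exact div_nonneg (vnorm_nonneg _) (blinf_nonneg y)

lemma omega2_mul_blinf_le {z : Fin p × Fin n → ℝ} (hzs : bl1 z ≤ s * blinf z) :
    omega2 A s * blinf z ≤ vnorm (A *ᵥ z) := by
  rcases eq_or_ne z 0 with rfl | hz
  · rw [blinf_zero, mul_zero]
    exact vnorm_nonneg _
  · exact (le_div_iff₀ (blinf_pos hz)).1 (omega2_le A hz hzs)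

lemma le_omega2 {c : ℝ} (hne : ∃ z : Fin p × Fin n → ℝ, z ≠ 0 ∧ bl1 z ≤ s * blinf z)
    (h : ∀ z : Fin p × Fin n → ℝ, z ≠ 0 → bl1 z ≤ s * blinf z → c * blinf z ≤ vnorm (A *ᵥ z)) :
    c ≤ omega2 A s := by
  obtain ⟨z₀, hz₀, hz₀s⟩ := hne
  refine le_csInf ⟨_, z₀, hz₀, hz₀s, rfl⟩ ?_
  rintro r ⟨z, hz, hzs, rfl⟩
  exact (le_div_iff₀ (blinf_pos hz)).2 (h z hz hzs)

lemma exists_vnorm_mulVec_eq_omega2 [Nonempty (Fin p)] {z₀ : Fin p × Fin n → ℝ} (hz₀ : z₀ ≠ 0)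
    (hz₀s : bl1 z₀ ≤ s * blinf z₀) :
    ∃ z, blinf z = 1 ∧ bl1 z ≤ s ∧ vnorm (A *ᵥ z) = omega2 A s := by
  set K : Set (Fin p × Fin n → ℝ) := {z | blinf z = 1 ∧ bl1 z ≤ s}
  have hK : IsCompact K := isCompact_of_isClosed_of_bl1_le
    ((isClosed_singleton.preimage continuous_blinf).inter (isClosed_Iic.preimage continuous_bl1))
    fun z hz => hz.2
  have hnorm : ∀ z, z ≠ 0 → bl1 z ≤ s * blinf z → (1 / blinf z) • z ∈ K := fun z hz hzs =>
    ⟨blinf_div_blinf_smul hz zero_le_one, by simpa using bl1_div_blinf_smul_le hz hzs zero_le_one⟩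
  obtain ⟨zs, ⟨hzs1, hzs2⟩, hmin⟩ :=
    hK.exists_isMinOn ⟨_, hnorm z₀ hz₀ hz₀s⟩ (continuous_vnorm_mulVec A).continuousOn
  have hzs0 : zs ≠ 0 := by
    rintro rfl
    simp [blinf_zero] at hzs1
  refine ⟨zs, hzs1, hzs2, le_antisymm ?_ ?_⟩
  · refine le_omega2 A ⟨z₀, hz₀, hz₀s⟩ fun z hz hzs => ?_
    have hpos := blinf_pos hz
    have := hmin (hnorm z hz hzs)
    simp only [Set.mem_ofPred_eq, vnorm_mulVec_smul, abs_of_pos (one_div_pos.2 hpos)] at this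
    rwa [← le_div_iff₀ hpos, div_eq_inv_mul, ← one_div]
  · simpa [hzs1] using omega2_le A hzs0 (by rwa [hzs1, mul_one])

lemma omega2_pos [Nonempty (Fin p)]
    (hs : s < sInf {r | ∃ z : Fin p × Fin n → ℝ, z ≠ 0 ∧ A *ᵥ z = 0 ∧ r = bl1 z / blinf z})
    {z₀ : Fin p × Fin n → ℝ} (hz₀ : z₀ ≠ 0) (hz₀s : bl1 z₀ ≤ s * blinf z₀) :
    0 < omega2 A s := by
  obtain ⟨z, hz1, hz2, hAz⟩ := exists_vnorm_mulVec_eq_omega2 A hz₀ hz₀s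
  rw [← hAz]
  refine (vnorm_nonneg _).lt_of_ne fun h => hs.not_ge ?_
  have hz : z ≠ 0 := by
    rintro rfl
    simp [blinf_zero] at hz1
  refine csInf_le_of_le ⟨0, ?_⟩ ⟨z, hz, vnorm_eq_zero.1 h.symm, rfl⟩ (by rwa [hz1, div_one])
  rintro r ⟨y, -, -, rfl⟩
  exact div_nonneg (bl1_nonneg y) (blinf_nonneg y)

end Omega

section MaxBlinf

variable {m n p : ℕ} (A : Matrix (Fin m) (Fin p × Fin n) ℝ)

/-- The paper's `f_s(η)`. -/
noncomputable def maxBlinf (s η : ℝ) : ℝ :=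
  sSup {r | ∃ z : Fin p × Fin n → ℝ, vnorm (A.mulVec z) ≤ 1 ∧ bl1 z ≤ s * η ∧ r = blinf z}

variable {s : ℝ}

lemma le_maxBlinf [Nonempty (Fin p)] {η : ℝ} {z : Fin p × Fin n → ℝ}
    (hAz : vnorm (A *ᵥ z) ≤ 1) (hz : bl1 z ≤ s * η) : blinf z ≤ maxBlinf A s η := by
  refine le_csSup ⟨s * η, ?_⟩ ⟨z, hAz, hz, rfl⟩
  rintro r ⟨y, -, hy, rfl⟩
  exact (blinf_le_bl1 y).trans hy

lemma maxBlinf_le {η c : ℝ} (hη : 0 ≤ s * η)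
    (h : ∀ z : Fin p × Fin n → ℝ, vnorm (A *ᵥ z) ≤ 1 → bl1 z ≤ s * η → blinf z ≤ c) :
    maxBlinf A s η ≤ c := by
  have h0 : vnorm (A *ᵥ (0 : Fin p × Fin n → ℝ)) ≤ 1 := by
    rw [Matrix.mulVec_zero, vnorm_eq_zero.2 rfl]
    exact zero_le_one
  have hbl1 : bl1 (0 : Fin p × Fin n → ℝ) ≤ s * η := by simpa [bl1, bnorm_zero] using hη
  refine csSup_le ⟨_, 0, h0, hbl1, rfl⟩ ?_
  rintro r ⟨z, hAz, hz, rfl⟩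
  exact h z hAz hz

lemma exists_blinf_eq_maxBlinf [Nonempty (Fin p)] {η : ℝ} (hη : 0 ≤ s * η) :
    ∃ z : Fin p × Fin n → ℝ, vnorm (A *ᵥ z) ≤ 1 ∧ bl1 z ≤ s * η ∧ blinf z = maxBlinf A s η := by
  set F : Set (Fin p × Fin n → ℝ) := {z | vnorm (A *ᵥ z) ≤ 1 ∧ bl1 z ≤ s * η}
  have hF : IsCompact F := isCompact_of_isClosed_of_bl1_le
    ((isClosed_Iic.preimage (continuous_vnorm_mulVec A)).inter
      (isClosed_Iic.preimage continuous_bl1)) fun z hz => hz.2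
  have h0 : (0 : Fin p × Fin n → ℝ) ∈ F := ⟨by simp [vnorm_eq_zero.2], by simpa [bl1, bnorm_zero]⟩
  obtain ⟨z, hzF, hmax⟩ := hF.exists_isMaxOn ⟨0, h0⟩ continuous_blinf.continuousOn
  exact ⟨z, hzF.1, hzF.2, le_antisymm (le_maxBlinf A hzF.1 hzF.2)
    (maxBlinf_le A hη fun y hy1 hy2 => hmax ⟨hy1, hy2⟩)⟩

lemma exists_blinf_lt [Nonempty (Fin p)] (hs : 1 < s) {w : Fin p × Fin n → ℝ} (hw : w ≠ 0)
    (hws : bl1 w ≤ s * blinf w) (hAw : vnorm (A *ᵥ w) < 1) :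
    ∃ w', vnorm (A *ᵥ w') ≤ 1 ∧ bl1 w' ≤ s * blinf w ∧ blinf w < blinf w' := by
  obtain ⟨i, hi⟩ := exists_bnorm_eq_blinf w
  -- `g t` is a convex combination of `w` and `s • restrictBlock w i`, both in the convex set
  -- `{bl1 ≤ s * blinf w}`, and it scales the largest block `i` of `w` by `1 + t * (s - 1) > 1`.
  set g : ℝ → Fin p × Fin n → ℝ := fun t => (1 - t) • w + (t * s) • restrictBlock w i
  have hg : Continuous fun t => vnorm (A *ᵥ g t) :=
    (continuous_vnorm_mulVec A).comp (by fun_prop)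
  have hsmall : ∀ᶠ t in nhdsWithin 0 (Set.Ioi 0), vnorm (A *ᵥ g t) < 1 ∧ t < 1 :=
    nhdsWithin_le_nhds <| ((hg.tendsto 0).eventually (gt_mem_nhds (by simpa [g] using hAw))).and
      (gt_mem_nhds zero_lt_one)
  obtain ⟨t, ⟨hAg, ht1⟩, ht0 : 0 < t⟩ := (hsmall.and self_mem_nhdsWithin).exists
  refine ⟨g t, hAg.le, ?_, ?_⟩
  · calc bl1 (g t) ≤ (1 - t) * bl1 w + t * s * blinf w := by
          refine (bl1_add_le _ _).trans_eq ?_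
          rw [bl1_smul, bl1_smul, bl1_restrictBlock, hi, abs_of_pos (by linarith),
            abs_of_pos (by positivity)]
      _ ≤ (1 - t) * (s * blinf w) + t * s * blinf w := by gcongr
      _ = s * blinf w := by ring
  · have hgi : bnorm (g t) i = bnorm ((1 + t * (s - 1)) • w) i := by
      refine bnorm_congr fun j => ?_
      simp only [g, restrictBlock, Pi.add_apply, Pi.smul_apply, smul_eq_mul, ↓reduceIte]
      ring
    calc blinf w < (1 + t * (s - 1)) * blinf w := by
          have := blinf_pos hw
          nlinarith [mul_pos ht0 (sub_pos.2 hs)]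
      _ = bnorm (g t) i := by
          rw [hgi, bnorm_smul, hi, abs_of_pos (by nlinarith)]
      _ ≤ blinf (g t) := bnorm_le_blinf _ i

lemma omega2_eq_of_maxBlinf_eq [Nonempty (Fin p)] (hs : 1 < s) {η : ℝ} (hη : 0 < η)
    (hfix : maxBlinf A s η = η) : omega2 A s = 1 / η := by
  obtain ⟨z₀, hAz₀, hz₀s, hz₀⟩ := exists_blinf_eq_maxBlinf A (by positivity : 0 ≤ s * η)
  rw [hfix] at hz₀
  have hz₀0 : z₀ ≠ 0 := by
    rintro rfl
    rw [blinf_zero] at hz₀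
    exact hη.ne hz₀
  have hz₀c : bl1 z₀ ≤ s * blinf z₀ := hz₀ ▸ hz₀s
  refine le_antisymm ((omega2_le A hz₀0 hz₀c).trans ?_) (le_omega2 A ⟨z₀, hz₀0, hz₀c⟩ ?_)
  · rw [hz₀]
    gcongr
  intro z hz hzs
  have hpos := blinf_pos hz
  set w := (η / blinf z) • z
  have hw : blinf w = η := blinf_div_blinf_smul hz hη.le
  have hAw : 1 ≤ vnorm (A *ᵥ w) := by
    by_contra! h
    have hw0 : w ≠ 0 := by
      rintro h0
      rw [h0, blinf_zero] at hw
      exact hη.ne hw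
    obtain ⟨w', hAw', hw's, hlt⟩ :=
      exists_blinf_lt A hs hw0 (hw ▸ bl1_div_blinf_smul_le hz hzs hη.le) h
    rw [hw] at hw's hlt
    linarith [le_maxBlinf A hAw' hw's]
  rw [vnorm_mulVec_smul, abs_of_pos (by positivity)] at hAw
  rw [one_div_mul_eq_div, div_le_iff₀ hη]
  rw [div_mul_eq_mul_div, le_div_iff₀ hpos] at hAw
  linarith

lemma maxBlinf_one_div_omega2 [Nonempty (Fin p)] (hs : 0 ≤ s) (hω : 0 < omega2 A s)
    {z₀ : Fin p × Fin n → ℝ} (hz₀ : z₀ ≠ 0) (hz₀s : bl1 z₀ ≤ s * blinf z₀) :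
    maxBlinf A s (1 / omega2 A s) = 1 / omega2 A s := by
  set ω := omega2 A s
  have hω' : 0 < 1 / ω := one_div_pos.2 hω
  refine le_antisymm (maxBlinf_le A (by positivity) fun z hAz hz => ?_) ?_
  · refine le_of_not_gt fun hlt => ?_
    have hzs : bl1 z ≤ s * blinf z := hz.trans (by gcongr)
    have := omega2_mul_blinf_le A hzs
    rw [div_lt_iff₀ hω] at hlt
    linarith
  · obtain ⟨zs, hzs1, hzs2, hAzs⟩ := exists_vnorm_mulVec_eq_omega2 A hz₀ hz₀s
    have h := le_maxBlinf A (z := (1 / ω) • zs) (η := 1 / ω)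
      (by rw [vnorm_mulVec_smul, abs_of_pos hω', hAzs, one_div_mul_cancel hω.ne'])
      (by rw [bl1_smul, abs_of_pos hω', mul_comm s]; gcongr)
    rwa [blinf_smul, abs_of_pos hω', hzs1, mul_one] at h

end MaxBlinf

theorem stmt14_general {m n p : ℕ} (A : Matrix (Fin m) (Fin p × Fin n) ℝ) (s sstar : ℝ) (f : ℝ → ℝ)
    (hsstar : sstar = sInf {r | ∃ z : Fin p × Fin n → ℝ,
      z ≠ 0 ∧ A.mulVec z = 0 ∧ r = bl1 z / blinf z})
    (hs1 : 1 < s) (hs2 : s < sstar)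
    (hf : ∀ η, f η = sSup {r | ∃ z : Fin p × Fin n → ℝ,
      vnorm (A.mulVec z) ≤ 1 ∧ bl1 z ≤ s * η ∧ r = blinf z}) :
    (∃! η : ℝ, 0 < η ∧ f η = η) ∧
    (∀ η : ℝ, 0 < η → f η = η → η = 1 / omega2 A s) := by
  obtain rfl : f = maxBlinf A s := funext hf
  subst hsstar
  -- `sInf ∅ = 0`, so `1 < s < s^*` forces a nonzero vector in the null space
  obtain ⟨z, hz⟩ : ∃ z : Fin p × Fin n → ℝ, z ≠ 0 := by
    by_contra! h
    simp [h] at hs2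
    linarith
  have : Nonempty (Fin p) := ⟨(Function.ne_iff.1 hz).choose.1⟩
  obtain ⟨y, hy, hys⟩ := exists_ne_zero_bl1_le_blinf hz
  have hys' : bl1 y ≤ s * blinf y := hys.trans (le_mul_of_one_le_left (blinf_nonneg y) hs1.le)
  have hω := omega2_pos A hs2 hy hys'
  have huniq : ∀ η, 0 < η → maxBlinf A s η = η → η = 1 / omega2 A s := fun η hη hfix => by
    rw [omega2_eq_of_maxBlinf_eq A hs1 hη hfix, one_div_one_div]
  refine ⟨⟨1 / omega2 A s, ⟨by positivity, ?_⟩, fun η hη => huniq η hη.1 hη.2⟩, huniq⟩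
  exact maxBlinf_one_div_omega2 A (by linarith) hω hy hys'

/-- Proposition 3, item 4: for `1 < s < s^*`, the function
`f_s(η) = sup{‖z‖_{b∞} : ‖Az‖₂ ≤ 1, ‖z‖_{b1} ≤ sη}` has a unique positive fixed point,
which equals `1/ω₂(A,s)`. -/
theorem stmt14 {m n p : ℕ} (A : Matrix (Fin m) (Fin p × Fin n) ℝ) (s sstar : ℝ) (f : ℝ → ℝ)
    (hm : m < (p - 1) * n)
    (hsstar : sstar = sInf {r | ∃ z : Fin p × Fin n → ℝ,
      z ≠ 0 ∧ A.mulVec z = 0 ∧ r = bl1 z / blinf z})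
    (hs1 : 1 < s) (hs2 : s < sstar)
    (hf : ∀ η, f η = sSup {r | ∃ z : Fin p × Fin n → ℝ,
      vnorm (A.mulVec z) ≤ 1 ∧ bl1 z ≤ s * η ∧ r = blinf z}) :
    (∃! η : ℝ, 0 < η ∧ f η = η) ∧
    (∀ η : ℝ, 0 < η → f η = η → η = 1 / omega2 A s) :=
  stmt14_general A s sstar f hsstar hs1 hs2 hf
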